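/- Let μ be a compactly supported Borel probability measure on ℝ^d × ℝ^d with velocity barycenter v̄ = (v̄_1,…,v̄_d). Let k ∈ {1,…,d}, x̃ ∈ ℝ^d, a_k ∈ ℝ and X, W_k ≥ 0, and suppose supp(μ) ⊆ B(x̃, X) × {w ∈ ℝ^d : a_k ≤ w_k ≤ a_k + W_k}. Set r⁻ = (φ(0)/(φ(0) + φ(2X)))·(v̄_k − a_k). Then for every (x, v) ∈ ℝ^d × ℝ^d with ‖x − x̃‖ ≤ X and v_k − v̄_k < −r⁻, one has ⟨ξ[μ](x, v), e_k⟩·(v_k − v̄_k) < 0, where e_k is the k-th standard basis vector of ℝ^d. -/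

import Mathlib

/-! On the support of `μ` the weight `φ ‖x - y‖` lies in `[φ (2X), φ 0]` and `w k ≥ ak`.
Bounding the weight from below by `φ (2X)` where `w k - v k ≥ 0` and from above by `φ 0` where
`w k - v k < 0`, the `k`-th component of `ξ[μ](x, v)` is at least
`φ (2X) (v̄ k - v k) - (φ 0 - φ (2X)) (v k - ak)⁺`, and `v̄ k - v k > r⁻` makes
this lower bound positive. -/

open MeasureTheory Metric Set

/-- The (topological) support of a measure. -/
def msupp {α : Type*} [TopologicalSpace α] [MeasurableSpace α]
    (μ : Measure α) : Set α :=
  {x | ∀ U : Set α, IsOpen U → x ∈ U → 0 < μ U}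

/-- The Cucker–Smale interaction kernel. -/
noncomputable def xi {d : ℕ} (φ : ℝ → ℝ)
    (μ : Measure (EuclideanSpace ℝ (Fin d) × EuclideanSpace ℝ (Fin d)))
    (x v : EuclideanSpace ℝ (Fin d)) : EuclideanSpace ℝ (Fin d) :=
  ∫ p, φ (‖x - p.1‖) • (p.2 - v) ∂μ

theorem msupp_eq_support {α : Type*} [TopologicalSpace α] [MeasurableSpace α]
    (μ : Measure α) : msupp μ = μ.support := by
  rw [Measure.support_eq_forall_isOpen]
  exact Set.ext fun x => forall_congr' fun U => forall_comm

theorem ae_mem_msupp {α : Type*} [TopologicalSpace α] [HereditarilyLindelofSpace α]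
    [MeasurableSpace α] (μ : Measure α) : ∀ᵐ p ∂μ, p ∈ msupp μ := by
  rw [msupp_eq_support]
  exact Measure.support_mem_ae

theorem Continuous.integrable_of_ae_mem_isCompact {α E : Type*} [TopologicalSpace α]
    [T2Space α] [MeasurableSpace α] [OpensMeasurableSpace α] [NormedAddCommGroup E]
    {μ : Measure α} [IsFiniteMeasure μ] {f : α → E} {K : Set α}
    (hf : Continuous f) (hK : IsCompact K) (hμK : ∀ᵐ p ∂μ, p ∈ K) : Integrable f μ := by
  rw [← Measure.restrict_eq_self_of_ae_mem hμK]
  exact hf.continuousOn.integrableOn_compact hK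

theorem mul_sub_max_le_mul {c c' g w u a : ℝ} (hg : g ∈ Icc c c') (ha : a ≤ w) :
    c * (w - u) - (c' - c) * max (u - a) 0 ≤ g * (w - u) := by
  obtain ⟨hcg, hgc'⟩ := hg
  rcases le_total u w with huw | hwu
  · nlinarith [le_max_right (u - a) 0]
  · nlinarith [le_max_left (u - a) 0]

theorem sub_mul_max_pos {c c' D s : ℝ} (hc : 0 < c) (hc' : 0 < c') (hD : 0 ≤ D)
    (hs : c' / (c' + c) * D < s) : 0 < c * s - (c' - c) * max (D - s) 0 := by
  have hs0 : 0 < s := lt_of_le_of_lt (by positivity) hs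
  rw [div_mul_eq_mul_div, div_lt_iff₀ (by positivity)] at hs
  rcases le_total D s with hDs | hsD
  · rw [max_eq_right (by linarith)]; nlinarith
  · rw [max_eq_left (by linarith)]; nlinarith

theorem integral_mul_sub_mul_sub_integral_neg {α : Type*} [MeasurableSpace α]
    {μ : Measure α} [IsProbabilityMeasure μ] {g h : α → ℝ} {c c' a u : ℝ}
    (hc : 0 < c) (hc' : 0 < c') (hh : Integrable h μ)
    (hgh : Integrable (fun p => g p * (h p - u)) μ)
    (hg : ∀ᵐ p ∂μ, g p ∈ Icc c c') (ha : ∀ᵐ p ∂μ, a ≤ h p)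
    (hu : u - ∫ p, h p ∂μ < -(c' / (c' + c) * ((∫ p, h p ∂μ) - a))) :
    (∫ p, g p * (h p - u) ∂μ) * (u - ∫ p, h p ∂μ) < 0 := by
  set m := ∫ p, h p ∂μ
  have hD : 0 ≤ m - a := by
    have := integral_mono_ae (integrable_const a) hh ha
    rw [integral_const, probReal_univ, one_smul] at this
    linarith
  have hs : 0 < m - u := by nlinarith [show 0 ≤ c' / (c' + c) * (m - a) by positivity]
  set K := (c' - c) * max (u - a) 0
  have hlin : Integrable (fun p => c * (h p - u)) μ := (hh.sub (integrable_const u)).const_mul c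
  have hlower : c * (m - u) - K ≤ ∫ p, g p * (h p - u) ∂μ := calc
    c * (m - u) - K = ∫ p, (c * (h p - u) - K) ∂μ := by
      rw [integral_sub hlin (integrable_const K), integral_const_mul,
        integral_sub hh (integrable_const u)]
      simp [m]
    _ ≤ ∫ p, g p * (h p - u) ∂μ :=
      integral_mono_ae (hlin.sub (integrable_const K)) hgh
        (by filter_upwards [hg, ha] with p hgp hap using mul_sub_max_le_mul hgp hap)
  have hpos : 0 < c * (m - u) - K := by
    simpa [K, sub_sub_sub_cancel_left] using sub_mul_max_pos (s := m - u) hc hc' hD (by linarith)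
  exact mul_neg_of_pos_of_neg (by linarith) (by linarith)

theorem stmt2_general {d : ℕ} (φ : ℝ → ℝ) (hφc : Continuous φ)
    (hφa : Antitone φ) (hφp : ∀ r : ℝ, 0 < φ r)
    (μ : Measure (EuclideanSpace ℝ (Fin d) × EuclideanSpace ℝ (Fin d)))
    [IsProbabilityMeasure μ] (hcs : IsCompact (msupp μ))
    (k : Fin d) (xt : EuclideanSpace ℝ (Fin d)) (ak X Wk : ℝ)
    (hsupp : msupp μ ⊆
      (closedBall xt X) ×ˢ {w : EuclideanSpace ℝ (Fin d) | ak ≤ w k ∧ w k ≤ ak + Wk})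
    (vbar : EuclideanSpace ℝ (Fin d)) (hvbar : vbar = ∫ p, p.2 ∂μ)
    (rm : ℝ) (hrm : rm = φ 0 / (φ 0 + φ (2 * X)) * (vbar k - ak))
    (x v : EuclideanSpace ℝ (Fin d)) (hx : ‖x - xt‖ ≤ X) (hv : v k - vbar k < -rm) :
    xi φ μ x v k * (v k - vbar k) < 0 := by
  have hae := ae_mem_msupp μ
  have hvel : Integrable (fun p => p.2) μ := continuous_snd.integrable_of_ae_mem_isCompact hcs hae
  have hker : Integrable (fun p => φ ‖x - p.1‖ • (p.2 - v)) μ :=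
    (by fun_prop : Continuous _).integrable_of_ae_mem_isCompact hcs hae
  have hxik : xi φ μ x v k = ∫ p, φ ‖x - p.1‖ * (p.2 k - v k) ∂μ := by
    simp [xi, eval_integral_piLp hker.eval_piLp k]
  have hvbark : vbar k = ∫ p, p.2 k ∂μ := by rw [hvbar, eval_integral_piLp hvel.eval_piLp k]
  have hweight : ∀ᵐ p ∂μ, φ ‖x - p.1‖ ∈ Icc (φ (2 * X)) (φ 0) := by
    filter_upwards [hae] with p hp
    have hp1 : dist p.1 xt ≤ X := (hsupp hp).1
    refine ⟨hφa ?_, hφa (norm_nonneg _)⟩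
    calc ‖x - p.1‖ = dist x p.1 := (dist_eq_norm _ _).symm
      _ ≤ dist x xt + dist p.1 xt := dist_triangle_right _ _ _
      _ ≤ 2 * X := by rw [dist_eq_norm]; linarith
  rw [hxik, hvbark]
  rw [hrm, hvbark] at hv
  exact integral_mul_sub_mul_sub_integral_neg (hφp _) (hφp _) (hvel.eval_piLp k)
    (by simpa using hker.eval_piLp k) hweight
    (by filter_upwards [hae] with p hp using (hsupp hp).2.1) hv

theorem stmt2 {d : ℕ} (hd : 0 < d) (φ : ℝ → ℝ) (hφc : Continuous φ)
    (hφa : Antitone φ) (hφp : ∀ r : ℝ, 0 < φ r)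
    (μ : Measure (EuclideanSpace ℝ (Fin d) × EuclideanSpace ℝ (Fin d)))
    [IsProbabilityMeasure μ] (hcs : IsCompact (msupp μ))
    (k : Fin d) (xt : EuclideanSpace ℝ (Fin d)) (ak X Wk : ℝ)
    (hX : 0 ≤ X) (hWk : 0 ≤ Wk)
    (hsupp : msupp μ ⊆
      (closedBall xt X) ×ˢ {w : EuclideanSpace ℝ (Fin d) | ak ≤ w k ∧ w k ≤ ak + Wk})
    (vbar : EuclideanSpace ℝ (Fin d)) (hvbar : vbar = ∫ p, p.2 ∂μ)
    (rm : ℝ) (hrm : rm = φ 0 / (φ 0 + φ (2 * X)) * (vbar k - ak))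
    (x v : EuclideanSpace ℝ (Fin d)) (hx : ‖x - xt‖ ≤ X) (hv : v k - vbar k < -rm) :
    xi φ μ x v k * (v k - vbar k) < 0 :=
  stmt2_general φ hφc hφa hφp μ hcs k xt ak X Wk hsupp vbar hvbar rm hrm x v hx hv
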